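/- Let ε > 0, θe > 0, α > 0, and ξ ∈ ℝ³ with ξ ≠ 0, and let {ξ1, ξ2} be an orthonormal basis of ξ^⊥ with ξ1 × ξ2 = ξ/|ξ|. Then the following three vectors of ℂ^14 all lie in the kernel of A_0(ε,ξ): e_0 := ( ξ/|ξ|, 0, 0, 0, 0, 0 ); the longitudinal acoustic vector f := (1 + θe²|ξ|²)^{−1/2} ( 0, −i θe ξ, 0, 1, 0, −1/α ); and the transverse acoustic vector g := (1 + |ξ|²)^{−1/2} ( ξ2, 0, i |ξ| ξ1, 0, 0, 0 ). That is, A_0(ε,ξ) e_0 = 0, A_0(ε,ξ) f = 0 and A_0(ε,ξ) g = 0. -/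

import Mathlib

/-!
The symbol `A₀(ε,ξ)` is `ℂ`-linear, so the normalising factors play no role. The vector `e₀` is
killed because `ξ × ξ = 0`. In `f` the electric field `−iθe ξ` exactly balances the electron
pressure `θe ξ n_e` and the ion pressure `εα ξ n_i`. For `g`, writing `ξ = |ξ| ξ1 × ξ2` the
vector triple product gives `ξ × ξ2 = −|ξ| ξ1`, which cancels the electron current `i v_e`, while
`ξ ⊥ ξ1` kills the electron density equation.
-/

noncomputable section

open scoped Matrix

/-- The state space `ℂ³ × ℂ³ × ℂ³ × ℂ × ℂ³ × ℂ` of the linearized Euler–Maxwell system,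
with coordinates `(B, E, v_e, n_e, v_i, n_i)`. -/
abbrev EMSpace :=
  (Fin 3 → ℂ) × (Fin 3 → ℂ) × (Fin 3 → ℂ) × ℂ × (Fin 3 → ℂ) × ℂ

/-- Complexification of a real frequency vector. -/
def ξC (ξ : Fin 3 → ℝ) : Fin 3 → ℂ := fun i => (ξ i : ℂ)

/-- The Euler–Maxwell symbol `A₀(ε,ξ)` at `u = 0`, acting on `(B,E,v_e,n_e,v_i,n_i)` by
`A₀(ε,ξ)u = (ξ×E, −ξ×B + i v_e − i(ε/θe) v_i, −i E + θe ξ n_e, θe ξ·v_e,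
i(ε/θe) E + εα ξ n_i, εα ξ·v_i)`. -/
def emSymbol (ε θe α : ℝ) (ξ : Fin 3 → ℝ) (u : EMSpace) : EMSpace :=
  ( crossProduct (ξC ξ) u.2.1,
    -(crossProduct (ξC ξ) u.1) + Complex.I • u.2.2.1
      - (Complex.I * ((ε / θe : ℝ) : ℂ)) • u.2.2.2.2.1,
    -(Complex.I • u.2.1) + ((θe : ℂ) * u.2.2.2.1) • ξC ξ,
    (θe : ℂ) * ∑ i, ξC ξ i * u.2.2.1 i,
    (Complex.I * ((ε / θe : ℝ) : ℂ)) • u.2.1 + (((ε * α : ℝ) : ℂ) * u.2.2.2.2.2) • ξC ξ,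
    ((ε * α : ℝ) : ℂ) * ∑ i, ξC ξ i * u.2.2.2.2.1 i )

/-- The convection operator `diag(0, 0, x I₃, x, y I₃, y)`. -/
def emConvection (x y : ℝ) (u : EMSpace) : EMSpace :=
  (0, 0, (x : ℂ) • u.2.2.1, (x : ℂ) * u.2.2.2.1,
    (y : ℂ) • u.2.2.2.2.1, (y : ℂ) * u.2.2.2.2.2)

/-- Euclidean length of a real 3-vector. -/
def len3 (ξ : Fin 3 → ℝ) : ℝ := Real.sqrt (∑ i, ξ i ^ 2)

/-- Real dot product. -/
def dot3 (a b : Fin 3 → ℝ) : ℝ := ∑ i, a i * b i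

lemma ξC_cross (a b : Fin 3 → ℝ) : ξC a ⨯₃ ξC b = ξC (a ⨯₃ b) := by
  ext i
  fin_cases i <;> simp [cross_apply, ξC]

lemma ξC_dotProduct (a b : Fin 3 → ℝ) : ξC a ⬝ᵥ ξC b = ((a ⬝ᵥ b : ℝ) : ℂ) := by
  simp [ξC, dotProduct]

lemma len3_sq (ξ : Fin 3 → ℝ) : len3 ξ ^ 2 = ξ ⬝ᵥ ξ := by
  rw [len3, Real.sq_sqrt (by positivity)]
  simp [dotProduct, sq]

lemma len3_eq_zero_iff {ξ : Fin 3 → ℝ} : len3 ξ = 0 ↔ ξ = 0 := by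
  rw [len3, Real.sqrt_eq_zero (by positivity),
    Finset.sum_eq_zero_iff_of_nonneg (fun i _ => sq_nonneg (ξ i))]
  simp [funext_iff]

lemma eq_len3_smul_cross {ξ ξ1 ξ2 : Fin 3 → ℝ} (hcross : ξ1 ⨯₃ ξ2 = (len3 ξ)⁻¹ • ξ) :
    ξ = len3 ξ • ξ1 ⨯₃ ξ2 := by
  by_cases hL : len3 ξ = 0
  · rw [hL, zero_smul]
    exact len3_eq_zero_iff.mp hL
  · rw [hcross, smul_smul, mul_inv_cancel₀ hL, one_smul]

lemma cross_eq_neg_len3_smul {ξ ξ1 ξ2 : Fin 3 → ℝ} (hξ2 : len3 ξ2 = 1)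
    (hperp12 : ξ1 ⬝ᵥ ξ2 = 0) (hcross : ξ1 ⨯₃ ξ2 = (len3 ξ)⁻¹ • ξ) :
    ξ ⨯₃ ξ2 = -len3 ξ • ξ1 := by
  have hunit : ξ2 ⬝ᵥ ξ2 = 1 := by rw [← len3_sq, hξ2, one_pow]
  calc ξ ⨯₃ ξ2 = len3 ξ • (ξ1 ⨯₃ ξ2 ⨯₃ ξ2) := by
        conv_lhs => rw [eq_len3_smul_cross hcross]
        rw [map_smul, LinearMap.smul_apply]
    _ = -len3 ξ • ξ1 := by
        rw [cross_cross_eq_smul_sub_smul, hunit, hperp12]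
        simp

lemma emSymbol_smul (ε θe α : ℝ) (ξ : Fin 3 → ℝ) (c : ℂ) (u : EMSpace) :
    emSymbol ε θe α ξ (c • u) = c • emSymbol ε θe α ξ u := by
  simp only [emSymbol, Prod.smul_fst, Prod.smul_snd, Prod.smul_mk, map_smul, smul_eq_mul,
    Pi.smul_apply, Finset.mul_sum]
  refine Prod.ext ?_ (Prod.ext ?_ (Prod.ext ?_ (Prod.ext ?_ (Prod.ext ?_ ?_)))) <;>
    simp only [smul_add, smul_sub, smul_neg, smul_smul, mul_comm, mul_left_comm, mul_assoc]

lemma emSymbol_magnetic_parallel (ε θe α : ℝ) (ξ : Fin 3 → ℝ) (c : ℝ) :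
    emSymbol ε θe α ξ (c • ξC ξ, 0, 0, 0, 0, 0) = 0 := by
  simp [emSymbol, cross_self]

lemma emSymbol_longitudinal (ε : ℝ) {θe α : ℝ} (hθe : θe ≠ 0) (hα : α ≠ 0) (ξ : Fin 3 → ℝ) :
    emSymbol ε θe α ξ
      (0, (-(Complex.I * θe)) • ξC ξ, 0, 1, 0, -(1 / (α : ℂ))) = 0 := by
  have hθe' : (θe : ℂ) ≠ 0 := by exact_mod_cast hθe
  have hα' : (α : ℂ) ≠ 0 := by exact_mod_cast hα
  simp only [emSymbol, Prod.mk_eq_zero]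
  refine ⟨?_, ?_, ?_, ?_, ?_, ?_⟩
  · simp [cross_self]
  · simp
  · ext i
    simp only [neg_smul, smul_neg, neg_neg, mul_one, Complex.coe_smul, Pi.add_apply,
      Pi.smul_apply, smul_eq_mul, Complex.real_smul, Pi.zero_apply]
    linear_combination θe * ξC ξ i * Complex.I_sq
  · simp
  · ext i
    simp only [Complex.ofReal_div, neg_smul, smul_neg, Complex.ofReal_mul, one_div, mul_neg,
      Pi.add_apply, Pi.neg_apply, Pi.smul_apply, smul_eq_mul, Pi.zero_apply]
    field_simp
    linear_combination (-ε * ξC ξ i) * Complex.I_sq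
  · simp

lemma emSymbol_transverse (ε θe α : ℝ) {ξ B v : Fin 3 → ℝ} (L : ℝ)
    (hcross : ξ ⨯₃ B = -L • v) (hperp : ξ ⬝ᵥ v = 0) :
    emSymbol ε θe α ξ (ξC B, 0, (Complex.I * L) • ξC v, 0, 0, 0) = 0 := by
  simp only [emSymbol, Prod.mk_eq_zero]
  refine ⟨?_, ?_, ?_, ?_, ?_, ?_⟩
  · simp
  · rw [ξC_cross, hcross]
    ext i
    simp only [neg_smul, smul_zero, Pi.sub_apply, Pi.add_apply, Pi.neg_apply, ξC,
      Pi.smul_apply, smul_eq_mul, Complex.ofReal_neg, Complex.ofReal_mul, neg_neg, Pi.zero_apply,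
      sub_zero]
    linear_combination (L * v i : ℂ) * Complex.I_sq
  · simp
  · change (θe : ℂ) * (ξC ξ ⬝ᵥ ((Complex.I * L) • ξC v)) = 0
    rw [dotProduct_smul, ξC_dotProduct, hperp]
    simp
  · simp
  · simp

theorem stmt_16_general (ε θe α : ℝ) (hθe : 0 < θe) (hα : 0 < α)
    (ξ ξ1 ξ2 : Fin 3 → ℝ)
    (hξ2 : len3 ξ2 = 1)
    (hperp1 : dot3 ξ ξ1 = 0) (hperp12 : dot3 ξ1 ξ2 = 0)
    (hcross : crossProduct ξ1 ξ2 = (len3 ξ)⁻¹ • ξ) :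
    let e0 : EMSpace := ( ((len3 ξ)⁻¹ : ℝ) • ξC ξ, 0, 0, 0, 0, 0 )
    let f : EMSpace :=
      (((1 + θe ^ 2 * len3 ξ ^ 2 : ℝ) ^ (-(1:ℝ)/2) : ℝ) : ℂ) •
        ( (0 : Fin 3 → ℂ), (-(Complex.I * (θe : ℂ))) • ξC ξ, (0 : Fin 3 → ℂ),
          (1 : ℂ), (0 : Fin 3 → ℂ), (-(1 / (α : ℂ))) )
    let g : EMSpace :=
      (((1 + len3 ξ ^ 2 : ℝ) ^ (-(1:ℝ)/2) : ℝ) : ℂ) •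
        ( ξC ξ2, (0 : Fin 3 → ℂ), (Complex.I * ((len3 ξ : ℝ) : ℂ)) • ξC ξ1,
          (0 : ℂ), (0 : Fin 3 → ℂ), (0 : ℂ) )
    emSymbol ε θe α ξ e0 = 0 ∧ emSymbol ε θe α ξ f = 0 ∧ emSymbol ε θe α ξ g = 0 := by
  intro e0 f g
  refine ⟨?_, ?_, ?_⟩
  · exact emSymbol_magnetic_parallel ε θe α ξ _
  · rw [emSymbol_smul, emSymbol_longitudinal ε hθe.ne' hα.ne' ξ, smul_zero]
  · rw [emSymbol_smul, emSymbol_transverse ε θe α (len3 ξ)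
      (cross_eq_neg_len3_smul hξ2 hperp12 hcross) hperp1, smul_zero]

/-- **Kernel vectors of the Euler–Maxwell symbol at `u = 0`.**
Let `ξ ≠ 0` and `{ξ1, ξ2}` an orthonormal basis of `ξ^⊥` with `ξ1 × ξ2 = ξ/|ξ|`. Then
`e₀ = (ξ/|ξ|,0,0,0,0,0)`, the longitudinal acoustic vector
`f = (1+θe²|ξ|²)^{−1/2}(0, −iθe ξ, 0, 1, 0, −1/α)` and the transverse acoustic vector
`g = (1+|ξ|²)^{−1/2}(ξ2, 0, i|ξ|ξ1, 0, 0, 0)` all lie in the kernel of `A₀(ε,ξ)`. -/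
theorem stmt_16 (ε θe α : ℝ) (hε : 0 < ε) (hθe : 0 < θe) (hα : 0 < α)
    (ξ ξ1 ξ2 : Fin 3 → ℝ) (hξ : ξ ≠ 0)
    (hξ1 : len3 ξ1 = 1) (hξ2 : len3 ξ2 = 1)
    (hperp1 : dot3 ξ ξ1 = 0) (hperp2 : dot3 ξ ξ2 = 0) (hperp12 : dot3 ξ1 ξ2 = 0)
    (hcross : crossProduct ξ1 ξ2 = (len3 ξ)⁻¹ • ξ) :
    let e0 : EMSpace := ( ((len3 ξ)⁻¹ : ℝ) • ξC ξ, 0, 0, 0, 0, 0 )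
    let f : EMSpace :=
      (((1 + θe ^ 2 * len3 ξ ^ 2 : ℝ) ^ (-(1:ℝ)/2) : ℝ) : ℂ) •
        ( (0 : Fin 3 → ℂ), (-(Complex.I * (θe : ℂ))) • ξC ξ, (0 : Fin 3 → ℂ),
          (1 : ℂ), (0 : Fin 3 → ℂ), (-(1 / (α : ℂ))) )
    let g : EMSpace :=
      (((1 + len3 ξ ^ 2 : ℝ) ^ (-(1:ℝ)/2) : ℝ) : ℂ) •
        ( ξC ξ2, (0 : Fin 3 → ℂ), (Complex.I * ((len3 ξ : ℝ) : ℂ)) • ξC ξ1,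
          (0 : ℂ), (0 : Fin 3 → ℂ), (0 : ℂ) )
    emSymbol ε θe α ξ e0 = 0 ∧ emSymbol ε θe α ξ f = 0 ∧ emSymbol ε θe α ξ g = 0 :=
  stmt_16_general ε θe α hθe hα ξ ξ1 ξ2 hξ2 hperp1 hperp12 hcross

end
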